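/- For every ρ ∈ (0,1), the quantity min{ inf_{n ∈ ℕ, n≥1} n·(1/(1−ρ))^{1/n} , ρ/(1−ρ) } is at most (C−1)·log(1/(1−ρ)) for C = 9/(8·log(1.5)) + 1, where log denotes the natural logarithm. -/

import Mathlib

open Real

private lemma exp_chord {a b u : ℝ} (hab : a < b) (ha : a ≤ u) (hb : u ≤ b) :
    Real.exp u ≤ (b - u) / (b - a) * Real.exp a + (u - a) / (b - a) * Real.exp b := by
  have hba : (0:ℝ) < b - a := by linarith
  have hw1 : (0:ℝ) ≤ (b - u) / (b - a) := div_nonneg (by linarith) hba.le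
  have hw2 : (0:ℝ) ≤ (u - a) / (b - a) := div_nonneg (by linarith) hba.le
  have hw : (b - u) / (b - a) + (u - a) / (b - a) = 1 := by
    field_simp
    ring
  have h := convexOn_exp.2 (Set.mem_univ a) (Set.mem_univ b) hw1 hw2 hw
  have heq : ((b - u) / (b - a)) • a + ((u - a) / (b - a)) • b = u := by
    simp only [smul_eq_mul]
    have hne : b - a ≠ 0 := hba.ne'
    field_simp
    ring
  rw [heq] at h
  simpa using h

/-- For every `ρ ∈ (0,1)`,
`min{ inf_{n ≥ 1} n·(1−ρ)^{−1/n} , ρ/(1−ρ) } ≤ (9/(8 log 1.5))·log(1/(1−ρ))`. -/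
theorem idleness_cost_bound (ρ : ℝ) (hρ : ρ ∈ Set.Ioo (0 : ℝ) 1) :
    min (⨅ n : ℕ+, (n : ℝ) * (1 - ρ) ^ (-(1 : ℝ) / (n : ℝ))) (ρ / (1 - ρ))
      ≤ 9 / (8 * Real.log 1.5) * Real.log (1 / (1 - ρ)) := by
  obtain ⟨hρ0, hρ1⟩ := hρ
  have h1ρ : 0 < 1 - ρ := by linarith
  set s := Real.log 1.5 with hs
  have hs0 : 0 < s := Real.log_pos (by norm_num)
  set t := Real.log (1 / (1 - ρ)) with ht
  have ht0 : 0 < t := Real.log_pos (by rw [lt_div_iff₀ h1ρ]; linarith)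
  have hexpt : Real.exp t = 1 / (1 - ρ) := Real.exp_log (by positivity)
  have hlog : Real.log (1 - ρ) = -t := by
    rw [ht, one_div, Real.log_inv, neg_neg]
  have hexp15 : Real.exp s = 1.5 := Real.exp_log (by norm_num)
  have hexp2 : Real.exp (2 * s) = 2.25 := by
    rw [show (2:ℝ) * s = s + s by ring, Real.exp_add, hexp15]; norm_num
  have hexp3 : Real.exp (3 * s) = 3.375 := by
    rw [show (3:ℝ) * s = s + (s + s) by ring, Real.exp_add, Real.exp_add, hexp15]; norm_num
  have hexp4 : Real.exp (4 * s) = 5.0625 := by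
    rw [show (4:ℝ) * s = (s + s) + (s + s) by ring, Real.exp_add, Real.exp_add, hexp15]
    norm_num
  by_cases hcase : t ≤ 4 * s
  · -- small t : use ρ/(1-ρ) = exp t - 1
    apply le_trans (min_le_right _ _)
    have hρval : ρ / (1 - ρ) = Real.exp t - 1 := by
      rw [hexpt]; field_simp
      ring
    rw [hρval]
    have hchord := exp_chord (a := 0) (b := 4 * s) (u := t) (by linarith) ht0.le hcase
    rw [Real.exp_zero, hexp4] at hchord
    have h1 : (4*s - t)/(4*s - 0) * 1 + (t - 0)/(4*s - 0) * 5.0625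
        = (4*s + 4.0625*t)/(4*s) := by
      field_simp
      ring
    rw [h1, le_div_iff₀ (by positivity)] at hchord
    rw [div_mul_eq_mul_div, le_div_iff₀ (by positivity : (0:ℝ) < 8 * s)]
    nlinarith [hchord, ht0.le, hs0.le]
  · -- large t : pick n with t/n ∈ [2s, 3s]
    push_neg at hcase
    set m : ℕ := max 2 ⌈t / (3 * s)⌉₊ with hm
    have hm2 : 2 ≤ m := le_max_left _ _
    have hmR : (2:ℝ) ≤ (m:ℝ) := by exact_mod_cast hm2
    have hm0 : 0 < (m:ℝ) := by linarith
    have hub : t ≤ 3 * s * m := by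
      have h1 : t / (3 * s) ≤ (⌈t / (3 * s)⌉₊ : ℝ) := Nat.le_ceil _
      have h2 : ((⌈t / (3 * s)⌉₊ : ℕ) : ℝ) ≤ (m : ℝ) := by
        exact_mod_cast le_max_right 2 ⌈t / (3 * s)⌉₊
      rw [div_le_iff₀ (by positivity)] at h1
      nlinarith
    have hlb : 2 * s * m ≤ t := by
      rcases le_or_gt ⌈t / (3 * s)⌉₊ 2 with h | h
      · have hme : m = 2 := by omega
        rw [hme]; push_cast; linarith
      · have hme : m = ⌈t / (3 * s)⌉₊ := by omega
        have h6 : 6 * s < t := by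
          have h2lt := (Nat.lt_ceil (n := 2) (a := t / (3*s))).mp h
          rw [lt_div_iff₀ (by positivity)] at h2lt
          push_cast at h2lt; linarith
        have hcl : ((⌈t / (3 * s)⌉₊ : ℕ) : ℝ) < t / (3 * s) + 1 :=
          Nat.ceil_lt_add_one (by positivity)
        rw [div_add' _ _ _ (by positivity), lt_div_iff₀ (by positivity)] at hcl
        rw [hme]
        nlinarith
    apply le_trans (min_le_left _ _)
    have hbdd : BddBelow (Set.range fun n : ℕ+ => (n : ℝ) * (1 - ρ) ^ (-(1 : ℝ) / (n : ℝ))) := by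
      refine ⟨0, ?_⟩
      rintro x ⟨k, rfl⟩
      have hrp := Real.rpow_nonneg h1ρ.le (-(1:ℝ)/(k:ℝ))
      positivity
    have hmpos : 0 < m := by omega
    refine le_trans (ciInf_le hbdd (⟨m, hmpos⟩ : ℕ+)) ?_
    show (m : ℝ) * (1 - ρ) ^ (-(1:ℝ) / (m : ℝ)) ≤ 9 / (8 * s) * t
    have hrpow : (1 - ρ) ^ (-(1:ℝ) / (m : ℝ)) = Real.exp (t / m) := by
      rw [Real.rpow_def_of_pos h1ρ, hlog]
      congr 1
      field_simp
    rw [hrpow]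
    have h2s : 2 * s ≤ t / m := by rw [le_div_iff₀ hm0]; linarith
    have h3s : t / m ≤ 3 * s := by rw [div_le_iff₀ hm0]; linarith
    have hchord := exp_chord (a := 2*s) (b := 3*s) (u := t/m) (by linarith) h2s h3s
    rw [hexp2, hexp3] at hchord
    have hsne : s ≠ 0 := hs0.ne'
    have hmne : (m:ℝ) ≠ 0 := hm0.ne'
    have h1 : (3*s - t/m)/(3*s - 2*s) * 2.25 + (t/m - 2*s)/(3*s - 2*s) * 3.375
        = 9 / (8 * s) * (t / m) := by
      rw [show 3*s - 2*s = s from by ring, div_mul_eq_mul_div, div_mul_eq_mul_div,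
        ← add_div, div_mul_eq_mul_div,
        div_eq_div_iff hsne (by positivity : (8:ℝ)*s ≠ 0)]
      ring
    rw [h1] at hchord
    calc (m:ℝ) * Real.exp (t / m) ≤ (m:ℝ) * (9 / (8 * s) * (t / m)) := by
          exact mul_le_mul_of_nonneg_left hchord (by positivity)
      _ = 9 / (8 * s) * t := by
          have hmne : (m:ℝ) ≠ 0 := hm0.ne'
          rw [mul_comm, mul_assoc, div_mul_cancel₀ _ hmne]
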